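/- With the notation of Theorem 2 of the ALRITE paper, for a single treated sample (x_i, t_i = 1, y_i) with mirror twin (x_j, t_j = 0, y_j) under embedding φ₁ (z_i = φ₁(x_i), z_j = φ₁(x_j)), true latent models ν₁⁰, ν₁¹ that are L-Lipschitz, learned model h₁⁰ that is L̂-Lipschitz, and τ̄_i = y_i - h₁⁰(z_i), τ(x_i) = (ν₁¹ - ν₁⁰)(z_i), one has (τ̄_i - τ(x_i))² ≤ 5(y_i - ν₁¹(z_i))² + 5(y_j - ν₁⁰(z_j))² + 5(y_j - h₁⁰(z_j))² + 5(L² + L̂²)‖z_j - z_i‖². -/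

import Mathlib

theorem sq_add_add_add_add_le {R : Type*} [CommRing R] [LinearOrder R] [IsStrictOrderedRing R]
    (a b c d e : R) :
    (a + b + c + d + e) ^ 2 ≤ 5 * (a ^ 2 + b ^ 2 + c ^ 2 + d ^ 2 + e ^ 2) := by
  nlinarith [sq_nonneg (a - b), sq_nonneg (a - c), sq_nonneg (a - d), sq_nonneg (a - e),
    sq_nonneg (b - c), sq_nonneg (b - d), sq_nonneg (b - e), sq_nonneg (c - d),
    sq_nonneg (c - e), sq_nonneg (d - e)]

theorem LipschitzWith.sq_sub_le {E : Type*} [SeminormedAddCommGroup E] {K : NNReal} {f : E → ℝ}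
    (hf : LipschitzWith K f) (x y : E) : (f x - f y) ^ 2 ≤ (K : ℝ) ^ 2 * ‖x - y‖ ^ 2 := by
  have h : |f x - f y| ≤ K * ‖x - y‖ := by
    simpa only [dist_eq_norm, Real.norm_eq_abs] using hf.dist_le_mul x y
  rw [← sq_abs, ← mul_pow]
  exact pow_le_pow_left₀ (abs_nonneg _) h 2

theorem stmt_15_general {Z : Type*} [NormedAddCommGroup Z] (L Lhat : NNReal)
    (ν10 ν11 h10 : Z → ℝ)
    (hν10 : LipschitzWith L ν10)
    (hh10 : LipschitzWith Lhat h10)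
    (zi zj : Z) (yi yj : ℝ)
    (τbar : ℝ) (hτbar : τbar = yi - h10 zi)
    (τi : ℝ) (hτi : τi = ν11 zi - ν10 zi) :
    (τbar - τi)^2 ≤
      5 * (yi - ν11 zi)^2 + 5 * (yj - ν10 zj)^2 + 5 * (yj - h10 zj)^2
        + 5 * ((L : ℝ)^2 + (Lhat : ℝ)^2) * ‖zj - zi‖^2 := by
  subst hτbar hτi
  have hν10_sq := hν10.sq_sub_le zi zj
  have hh10_sq := hh10.sq_sub_le zj zi
  rw [norm_sub_rev] at hν10_sq
  calc (yi - h10 zi - (ν11 zi - ν10 zi)) ^ 2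
      = ((yi - ν11 zi) + (ν10 zi - ν10 zj) + (ν10 zj - yj) + (yj - h10 zj)
          + (h10 zj - h10 zi)) ^ 2 := by ring
    _ ≤ 5 * ((yi - ν11 zi) ^ 2 + (ν10 zi - ν10 zj) ^ 2 + (ν10 zj - yj) ^ 2
          + (yj - h10 zj) ^ 2 + (h10 zj - h10 zi) ^ 2) := sq_add_add_add_add_le ..
    _ ≤ _ := by
      rw [sub_sq_comm (ν10 zj)]
      linarith

theorem stmt_15 {Z : Type*} [NormedAddCommGroup Z] (L Lhat : NNReal)
    (ν10 ν11 h10 : Z → ℝ)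
    (hν10 : LipschitzWith L ν10) (hν11 : LipschitzWith L ν11)
    (hh10 : LipschitzWith Lhat h10)
    (zi zj : Z) (yi yj : ℝ)
    (τbar : ℝ) (hτbar : τbar = yi - h10 zi)
    (τi : ℝ) (hτi : τi = ν11 zi - ν10 zi) :
    (τbar - τi)^2 ≤
      5 * (yi - ν11 zi)^2 + 5 * (yj - ν10 zj)^2 + 5 * (yj - h10 zj)^2
        + 5 * ((L : ℝ)^2 + (Lhat : ℝ)^2) * ‖zj - zi‖^2 :=
  stmt_15_general L Lhat ν10 ν11 h10 hν10 hh10 zi zj yi yj τbar hτbar τi hτi
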